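/- The Hessian of φ(x;r) = (1/2)(∑ r_i r_{i+1} sin x_i)(n ∑ x_i² − (∑ x_i)²) + n ∑ r_i² − (∑ r_i)² at z_* = (2π/n,...,2π/n; 1,...,1) is the block diagonal matrix with blocks n sin(2π/n)·C and 2C, where C has diagonal entries n−1 and off-diagonal entries −1; in particular the mixed second derivatives D_{r_k x_l}φ(z_*) vanish. -/

import Mathlib

/-!
Write `D(y) = n ∑ yᵢ² - (∑ yᵢ)² = yᵀ C y`, so that `φ(x; r) = ½ S(x, r) D(x) + D(r)` with
`S(x, r) = ∑ rᵢ rᵢ₊₁ sin xᵢ`. Since `D` is invariant under adding a constant vector, along any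
two-parameter perturbation `x_* + s eₖ + t eₗ` of the constant vector `x_*` it is the homogeneous
quadratic `C_kk s² + 2 C_kl s t + C_ll t²`. A smooth function times such a quadratic has mixed
second derivative `2 C_kl` times its value at the origin, and every other contribution to the
Hessian is killed by the second-order vanishing of `D` at `x_*`.
-/

open Real

noncomputable def phi (n : ℕ) [NeZero n] (x r : Fin n → ℝ) : ℝ :=
  (1 / 2) * (∑ i, r i * r (i + 1) * Real.sin (x i))
      * ((n : ℝ) * ∑ i, (x i) ^ 2 - (∑ i, x i) ^ 2)
    + (n : ℝ) * ∑ i, (r i) ^ 2 - (∑ i, r i) ^ 2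

open Finset

@[fun_prop]
theorem ContDiff.ite_zero {𝕜 E F : Type*} [NontriviallyNormedField 𝕜] [NormedAddCommGroup E]
    [NormedSpace 𝕜 E] [NormedAddCommGroup F] [NormedSpace 𝕜 F] {n : WithTop ℕ∞} {f : E → F}
    (P : Prop) [Decidable P] (hf : ContDiff 𝕜 n f) :
    ContDiff 𝕜 n (fun x => if P then f x else 0) := by
  by_cases h : P
  · simpa [h] using hf
  · simpa [h] using contDiff_const

theorem deriv_deriv_mul_quadratic_add {g : ℝ × ℝ → ℝ} (hg : ContDiff ℝ 2 g) (h : ℝ → ℝ)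
    (a b c : ℝ) :
    deriv (fun s => deriv (fun t => g (s, t) * (a * s ^ 2 + 2 * b * s * t + c * t ^ 2) + h s) 0) 0
      = 2 * b * g (0, 0) := by
  set gₜ : ℝ → ℝ := fun s => fderiv ℝ g (s, 0) (0, 1)
  have hg_t (s : ℝ) : HasDerivAt (fun t => g (s, t)) (gₜ s) 0 :=
    (hg.differentiable (by norm_num) (s, 0)).hasFDerivAt.comp_hasDerivAt (x := 0)
      (f := fun t => (s, t)) ((hasDerivAt_const _ s).prodMk (hasDerivAt_id 0))
  have inner :
      (fun s => deriv (fun t => g (s, t) * (a * s ^ 2 + 2 * b * s * t + c * t ^ 2) + h s) 0)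
        = fun s => gₜ s * (a * s ^ 2) + g (s, 0) * (2 * b * s) := by
    funext s
    have hq : HasDerivAt (fun t => a * s ^ 2 + 2 * b * s * t + c * t ^ 2) (2 * b * s) 0 := by
      simpa using (((hasDerivAt_id' (0 : ℝ)).const_mul (2 * b * s)).const_add (a * s ^ 2)).fun_add
        ((hasDerivAt_pow 2 (0 : ℝ)).const_mul c)
    simpa using (((hg_t s).fun_mul hq).add_const (h s)).deriv
  have hgₜ : DifferentiableAt ℝ gₜ 0 := by
    have hD : Differentiable ℝ (fderiv ℝ g) :=
      (hg.fderiv_right (m := 1) le_rfl).differentiable one_ne_zero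
    exact ((hD _).comp (0 : ℝ) (differentiableAt_id.prodMk (differentiableAt_const _))).clm_apply
      (differentiableAt_const _)
  have hg0 : DifferentiableAt ℝ (fun s => g (s, 0)) 0 :=
    (hg.differentiable (by norm_num) _).comp _
      (differentiableAt_id.prodMk (differentiableAt_const _))
  rw [inner]
  simpa [mul_comm] using ((hgₜ.hasDerivAt.fun_mul ((hasDerivAt_pow 2 (0 : ℝ)).const_mul a)).fun_add
    (hg0.hasDerivAt.fun_mul ((hasDerivAt_id' (0 : ℝ)).const_mul (2 * b)))).deriv

section Dispersion

variable {ι : Type*} [Fintype ι]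

/-- The quadratic form `D(x) = xᵀ C x` of `C = (card ι) • 1 - J`. -/
def dispersion (x : ι → ℝ) : ℝ := Fintype.card ι * ∑ i, x i ^ 2 - (∑ i, x i) ^ 2

theorem dispersion_const_add (c : ℝ) (y : ι → ℝ) :
    dispersion (fun i => c + y i) = dispersion y := by
  simp only [dispersion, add_sq, sum_add_distrib, sum_const, card_univ, nsmul_eq_mul, ← mul_sum]
  ring

theorem dispersion_const (c : ℝ) : dispersion (fun _ : ι => c) = 0 := by
  simpa [dispersion] using dispersion_const_add (ι := ι) c 0

variable [DecidableEq ι]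

theorem dispersion_ite_add_ite (k l : ι) (s t : ℝ) :
    dispersion (fun i => (if i = k then s else 0) + (if i = l then t else 0))
      = (Fintype.card ι - 1) * s ^ 2
        + 2 * (if k = l then (Fintype.card ι : ℝ) - 1 else -1) * s * t
        + (Fintype.card ι - 1) * t ^ 2 := by
  simp only [dispersion, add_sq, sum_add_distrib, ite_pow, mul_ite, ite_mul, zero_pow two_ne_zero,
    mul_zero, zero_mul, sum_ite_eq', mem_univ, if_true]
  rcases eq_or_ne k l with rfl | hkl
  · simp only [if_true]
    ring
  · simp only [hkl, hkl.symm, if_false]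
    ring

theorem dispersion_const_add_ite_add_ite (c : ℝ) (k l : ι) (s t : ℝ) :
    dispersion (fun i => c + (if i = k then s else 0) + (if i = l then t else 0))
      = (Fintype.card ι - 1) * s ^ 2
        + 2 * (if k = l then (Fintype.card ι : ℝ) - 1 else -1) * s * t
        + (Fintype.card ι - 1) * t ^ 2 := by
  simp only [add_assoc, dispersion_const_add, dispersion_ite_add_ite]

theorem dispersion_const_add_ite (c : ℝ) (l : ι) (t : ℝ) :
    dispersion (fun i => c + if i = l then t else 0) = (Fintype.card ι - 1) * t ^ 2 := by
  simpa using dispersion_const_add_ite_add_ite c l l 0 t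

end Dispersion

theorem phi_eq_dispersion (n : ℕ) [NeZero n] (x r : Fin n → ℝ) :
    phi n x r = 1 / 2 * (∑ i, r i * r (i + 1) * Real.sin (x i)) * dispersion x + dispersion r := by
  simp only [phi, dispersion, Fintype.card_fin]
  ring

theorem deriv_deriv_phi_x (n : ℕ) [NeZero n] (k l : Fin n) :
    deriv (fun s : ℝ => deriv (fun t : ℝ =>
        phi n (fun i => 2 * π / n + (if i = k then s else 0) + (if i = l then t else 0))
          (fun _ => 1)) 0) 0
      = n * Real.sin (2 * π / n) * (if k = l then (n : ℝ) - 1 else -1) := by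
  have h := deriv_deriv_mul_quadratic_add
    (g := fun p : ℝ × ℝ => 1 / 2 * ∑ i : Fin n, 1 * 1 *
      Real.sin (2 * π / n + (if i = k then p.1 else 0) + (if i = l then p.2 else 0)))
    (by fun_prop) (fun _ => dispersion fun _ : Fin n => (1 : ℝ))
    (n - 1) (if k = l then (n : ℝ) - 1 else -1) (n - 1)
  simp only [phi_eq_dispersion, dispersion_const_add_ite_add_ite, Fintype.card_fin]
  rw [h]
  simp only [ite_self, add_zero, mul_one, sum_const, card_univ, Fintype.card_fin, nsmul_eq_mul]
  ring

theorem deriv_deriv_phi_r (n : ℕ) [NeZero n] (k l : Fin n) :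
    deriv (fun s : ℝ => deriv (fun t : ℝ =>
        phi n (fun _ => 2 * π / n)
          (fun i => 1 + (if i = k then s else 0) + (if i = l then t else 0))) 0) 0
      = 2 * (if k = l then (n : ℝ) - 1 else -1) := by
  have h := deriv_deriv_mul_quadratic_add (g := fun _ => 1) contDiff_const (fun _ => 0)
    (n - 1) (if k = l then (n : ℝ) - 1 else -1) (n - 1)
  simp only [phi_eq_dispersion, dispersion_const, dispersion_const_add_ite_add_ite,
    Fintype.card_fin, mul_zero, zero_add, one_mul, add_zero] at h ⊢
  rw [h, mul_one]

theorem deriv_deriv_phi_mixed (n : ℕ) [NeZero n] (k l : Fin n) :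
    deriv (fun s : ℝ => deriv (fun t : ℝ =>
        phi n (fun i => 2 * π / n + if i = l then t else 0)
          (fun i => 1 + if i = k then s else 0)) 0) 0 = 0 := by
  have h := deriv_deriv_mul_quadratic_add
    (g := fun p : ℝ × ℝ => 1 / 2 * ∑ i : Fin n,
      (1 + if i = k then p.1 else 0) * (1 + if i + 1 = k then p.1 else 0) *
        Real.sin (2 * π / n + if i = l then p.2 else 0))
    (by fun_prop) (fun s => ((n : ℝ) - 1) * s ^ 2) 0 0 (n - 1)
  simp only [phi_eq_dispersion, dispersion_const_add_ite, Fintype.card_fin]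
  simp only [zero_mul, mul_zero, zero_add] at h
  rw [h]

theorem hessian_phi_general (n : ℕ) [NeZero n] :
    (∀ k l : Fin n,
      deriv (fun s : ℝ => deriv (fun t : ℝ =>
          phi n (fun i => 2 * π / n + (if i = k then s else 0) + (if i = l then t else 0))
            (fun _ => 1)) 0) 0
        = n * Real.sin (2 * π / n) * (if k = l then (n : ℝ) - 1 else -1)) ∧
    (∀ k l : Fin n,
      deriv (fun s : ℝ => deriv (fun t : ℝ =>
          phi n (fun _ => 2 * π / n)
            (fun i => 1 + (if i = k then s else 0) + (if i = l then t else 0))) 0) 0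
        = 2 * (if k = l then (n : ℝ) - 1 else -1)) ∧
    (∀ k l : Fin n,
      deriv (fun s : ℝ => deriv (fun t : ℝ =>
          phi n (fun i => 2 * π / n + if i = l then t else 0)
            (fun i => 1 + if i = k then s else 0)) 0) 0
        = 0) :=
  ⟨deriv_deriv_phi_x n, deriv_deriv_phi_r n, deriv_deriv_phi_mixed n⟩

/-- The Hessian of φ at z_* = (2π/n,…,2π/n; 1,…,1) is block diagonal with blocks
n sin(2π/n)·C and 2C, where C has diagonal n−1 and off-diagonal −1; in particular
the mixed second derivatives vanish. -/
theorem hessian_phi (n : ℕ) [NeZero n] (hn : 3 ≤ n) :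
    (∀ k l : Fin n,
      deriv (fun s : ℝ => deriv (fun t : ℝ =>
          phi n (fun i => 2 * π / n + (if i = k then s else 0) + (if i = l then t else 0))
            (fun _ => 1)) 0) 0
        = n * Real.sin (2 * π / n) * (if k = l then (n : ℝ) - 1 else -1)) ∧
    (∀ k l : Fin n,
      deriv (fun s : ℝ => deriv (fun t : ℝ =>
          phi n (fun _ => 2 * π / n)
            (fun i => 1 + (if i = k then s else 0) + (if i = l then t else 0))) 0) 0
        = 2 * (if k = l then (n : ℝ) - 1 else -1)) ∧
    (∀ k l : Fin n,
      deriv (fun s : ℝ => deriv (fun t : ℝ =>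
          phi n (fun i => 2 * π / n + if i = l then t else 0)
            (fun i => 1 + if i = k then s else 0)) 0) 0
        = 0) :=
  hessian_phi_general n
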